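/- arXiv:2605.23673 — 4 statements merged into one kernel-verified Lean document; each statement's English description precedes it below -/
import Mathlib

section
/- Let μ^L_{(m,n)} = |r^{L,m}_n| and μ^l_{(m,n)} = max_{(m',n')} |T^{l,m,m'}_{n,n'}| · μ^{l+1}_{(m',n')} for l = L−1,…,0. Suppose a neuron-level walk (m̂,n̂) is constructed greedily: (m̂_0,n̂_0) is a maximizer of μ^0 over [M]×[N⁽⁰⁾], and for each l = 0,…,L−1, (m̂_{l+1},n̂_{l+1}) is a maximizer of (m',n') ↦ |T^{l,m̂_l,m̂_{l+1} := m'}_{n̂_l,n'}| · μ^{l+1}_{(m',n')}. Then (m̂,n̂) attains the maximum of the absolute neuron-level walk relevance: R̃^{m̂,n̂} = max_{(m,n)} R̃^{m,n}. -/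
/-- Backtracing correctness: the greedily constructed walk `(m̂, n̂)` — where
`(m̂_0, n̂_0)` maximizes `μ^0` and each `(m̂_{l+1}, n̂_{l+1})` maximizes
`(m',n') ↦ |T^{l,m̂_l,m'}_{n̂_l,n'}| · μ^{l+1}_{(m',n')}` — attains the maximum
absolute neuron-level walk relevance. -/
theorem stmt_2 (L M : ℕ) (hL : 1 ≤ L) (N : Fin (L + 1) → ℕ)
    (T : (l : Fin L) → Fin (M + 1) → Fin (M + 1) →
      Fin (N l.castSucc + 1) → Fin (N l.succ + 1) → ℝ)
    (r : Fin (M + 1) → Fin (N (Fin.last L) + 1) → ℝ)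
    (μ : (j : Fin (L + 1)) → Fin (M + 1) → Fin (N j + 1) → ℝ)
    (hμL : ∀ m n, μ (Fin.last L) m n = |r m n|)
    (hμ : ∀ (l : Fin L) (m : Fin (M + 1)) (n : Fin (N l.castSucc + 1)),
      μ l.castSucc m n =
        Finset.univ.sup' Finset.univ_nonempty
          (fun p : Fin (M + 1) × Fin (N l.succ + 1) =>
            |T l m p.1 n p.2| * μ l.succ p.1 p.2))
    (mh : Fin (L + 1) → Fin (M + 1)) (nh : (j : Fin (L + 1)) → Fin (N j + 1))
    (hgreedy0 : ∀ p : Fin (M + 1) × Fin (N 0 + 1), μ 0 p.1 p.2 ≤ μ 0 (mh 0) (nh 0))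
    (hgreedy : ∀ (l : Fin L) (p : Fin (M + 1) × Fin (N l.succ + 1)),
      |T l (mh l.castSucc) p.1 (nh l.castSucc) p.2| * μ l.succ p.1 p.2 ≤
        |T l (mh l.castSucc) (mh l.succ) (nh l.castSucc) (nh l.succ)| *
          μ l.succ (mh l.succ) (nh l.succ)) :
    (∏ l : Fin L,
        |T l (mh l.castSucc) (mh l.succ) (nh l.castSucc) (nh l.succ)|) *
        |r (mh (Fin.last L)) (nh (Fin.last L))| =
      Finset.univ.sup' Finset.univ_nonempty
        (fun w : (Fin (L + 1) → Fin (M + 1)) × ((j : Fin (L + 1)) → Fin (N j + 1)) =>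
          (∏ l : Fin L,
            |T l (w.1 l.castSucc) (w.1 l.succ) (w.2 l.castSucc) (w.2 l.succ)|) *
            |r (w.1 (Fin.last L)) (w.2 (Fin.last L))|) := by

  classical
  set P := fun (w1 : Fin (L + 1) → Fin (M + 1))
      (w2 : (j : Fin (L + 1)) → Fin (N j + 1)) (j : Fin (L + 1)) =>
    (∏ l ∈ Finset.univ.filter (fun l : Fin L => (j : ℕ) ≤ (l : ℕ)),
      |T l (w1 l.castSucc) (w1 l.succ) (w2 l.castSucc) (w2 l.succ)|) *
      |r (w1 (Fin.last L)) (w2 (Fin.last L))| with hP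
  have hfilter : ∀ l : Fin L,
      (Finset.univ.filter (fun l' : Fin L => ((l.castSucc : Fin (L+1)) : ℕ) ≤ (l' : ℕ)))
        = insert l (Finset.univ.filter (fun l' : Fin L => ((l.succ : Fin (L+1)) : ℕ) ≤ (l' : ℕ))) := by
    intro l
    ext l'
    simp [Fin.ext_iff, Fin.coe_castSucc, Fin.val_succ]
    omega
  have hstep : ∀ w1 w2 (l : Fin L), P w1 w2 l.castSucc =
      |T l (w1 l.castSucc) (w1 l.succ) (w2 l.castSucc) (w2 l.succ)| * P w1 w2 l.succ := by
    intro w1 w2 l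
    simp only [hP]
    rw [hfilter l, Finset.prod_insert (by simp)]
    ring
  have hlast : ∀ w1 w2, P w1 w2 (Fin.last L) = |r (w1 (Fin.last L)) (w2 (Fin.last L))| := by
    intro w1 w2
    simp only [hP]
    rw [Finset.filter_false_of_mem, Finset.prod_empty, one_mul]
    intro l _
    simp only [Fin.val_last]
    exact Nat.not_le.mpr l.isLt
  have hzero : ∀ w1 w2, P w1 w2 0 =
      (∏ l : Fin L, |T l (w1 l.castSucc) (w1 l.succ) (w2 l.castSucc) (w2 l.succ)|) *
        |r (w1 (Fin.last L)) (w2 (Fin.last L))| := by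
    intro w1 w2
    simp only [hP]
    congr 1
    rw [Finset.filter_true_of_mem (fun (l : Fin L) _ => by simp :
      ∀ l ∈ (Finset.univ : Finset (Fin L)), ((0 : Fin (L+1)) : ℕ) ≤ (l : ℕ))]
  have key : ∀ w1 w2 (j : Fin (L + 1)), P w1 w2 j ≤ μ j (w1 j) (w2 j) := by
    intro w1 w2 j
    induction j using Fin.reverseInduction with
    | last => rw [hlast, hμL]
    | cast l ih =>
      rw [hstep, hμ]
      calc |T l (w1 l.castSucc) (w1 l.succ) (w2 l.castSucc) (w2 l.succ)| * P w1 w2 l.succ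
          ≤ |T l (w1 l.castSucc) (w1 l.succ) (w2 l.castSucc) (w2 l.succ)| *
              μ l.succ (w1 l.succ) (w2 l.succ) :=
            mul_le_mul_of_nonneg_left ih (abs_nonneg _)
        _ ≤ _ := Finset.le_sup' (fun p : Fin (M + 1) × Fin (N l.succ + 1) =>
              |T l (w1 l.castSucc) p.1 (w2 l.castSucc) p.2| * μ l.succ p.1 p.2)
              (Finset.mem_univ (w1 l.succ, w2 l.succ))
  have keyg : ∀ j : Fin (L + 1), P mh nh j = μ j (mh j) (nh j) := by
    intro j
    induction j using Fin.reverseInduction with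
    | last => rw [hlast, hμL]
    | cast l ih =>
      rw [hstep, ih, hμ]
      refine le_antisymm ?_ (Finset.sup'_le _ _ (fun p _ => hgreedy l p))
      exact Finset.le_sup' (fun p : Fin (M + 1) × Fin (N l.succ + 1) =>
        |T l (mh l.castSucc) p.1 (nh l.castSucc) p.2| * μ l.succ p.1 p.2)
        (Finset.mem_univ (mh l.succ, nh l.succ))
  rw [← hzero mh nh]
  refine le_antisymm ?_ (Finset.sup'_le _ _ ?_)
  · calc P mh nh 0 = (∏ l : Fin L,
          |T l (mh l.castSucc) (mh l.succ) (nh l.castSucc) (nh l.succ)|) *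
          |r (mh (Fin.last L)) (nh (Fin.last L))| := hzero mh nh
      _ ≤ _ := Finset.le_sup'
          (fun w : (Fin (L + 1) → Fin (M + 1)) × ((j : Fin (L + 1)) → Fin (N j + 1)) =>
            (∏ l : Fin L,
              |T l (w.1 l.castSucc) (w.1 l.succ) (w.2 l.castSucc) (w.2 l.succ)|) *
              |r (w.1 (Fin.last L)) (w.2 (Fin.last L))|)
          (Finset.mem_univ (mh, nh))
  · intro w _
    calc (∏ l : Fin L,
          |T l (w.1 l.castSucc) (w.1 l.succ) (w.2 l.castSucc) (w.2 l.succ)|) *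
          |r (w.1 (Fin.last L)) (w.2 (Fin.last L))| = P w.1 w.2 0 := (hzero w.1 w.2).symm
      _ ≤ μ 0 (w.1 0) (w.2 0) := key w.1 w.2 0
      _ ≤ μ 0 (mh 0) (nh 0) := hgreedy0 (w.1 0, w.2 0)
      _ = P mh nh 0 := (keyg 0).symm
end

section
/- Let μ^L_{(m,n)} = |r^{L,m}_n| and μ^l_{(m,n)} = max_{(m',n')} |T^{l,m,m'}_{n,n'}| · μ^{l+1}_{(m',n')} for l = L−1,…,0, and let ŵ = (m̂,n̂) be any neuron-level walk. Assume [M]×[N⁽ⁱ⁾] has at least two elements for the given layer i. Then the maximum of the absolute neuron-level walk relevance R̃ over the constrained subset A_i = { (m,n) : (m_j,n_j) = (m̂_j,n̂_j) for all j < i, (m_i,n_i) ≠ (m̂_i,n̂_i) } equals, for i ≥ 1, (∏_{j=0}^{i−2} |T^{j,m̂_j,m̂_{j+1}}_{n̂_j,n̂_{j+1}}|) · max_{(m,n) ≠ (m̂_i,n̂_i)} |T^{i−1,m̂_{i−1},m}_{n̂_{i−1},n}| · μ^i_{(m,n)}, and for i = 0 it equals max_{(m,n) ≠ (m̂_0,n̂_0)}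 μ^0_{(m,n)}. (In particular, the constrained maximization can be carried out by reusing the unconstrained messages μ^l.) -/
/-!
The absolute relevance of a walk is a path weight on a layered graph with nonnegative edge
weights, and the `μ^l` are the messages of the max-product (Viterbi) recursion: by backward
induction, `μ^l` at a node bounds the weight of every walk suffix starting there and is attained
by following maximizing successors. A walk that agrees with `ŵ` before layer `i` and passes
through `x` at layer `i` has weight (fixed prefix of `ŵ`) · (edge from `ŵ_{i-1}` to `x`) ·
(suffix from `x`), so its maximum is the prefix times `|T| · μ^i_x`. The set `A_i` is the
union of these fibers over `x ≠ ŵ_i`, and its maximum is the largest fiber maximum.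
-/

open Finset

theorem isGreatest_image_sep_ne_of_isGreatest_fibers {α β : Type*}
    [Finite β] [Nontrivial β] {F : α → ℝ} {S : Set α} {π : α → β} {g : β → ℝ}
    {c : ℝ} (hc : 0 ≤ c) (q : β)
    (hfib : ∀ p, IsGreatest (F '' {w ∈ S | π w = p}) (c * g p)) :
    IsGreatest (F '' {w ∈ S | π w ≠ q}) (c * sSup {x | ∃ p, p ≠ q ∧ x = g p}) := by
  set G := {x | ∃ p, p ≠ q ∧ x = g p}
  have hG : G.Finite := (Set.finite_range g).subset fun _ ⟨p, _, hx⟩ => ⟨p, hx.symm⟩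
  have hGne : G.Nonempty := let ⟨p, hp⟩ := exists_ne q; ⟨g p, p, hp, rfl⟩
  obtain ⟨p, hpq, hp⟩ := hGne.csSup_mem hG
  refine ⟨?_, ?_⟩
  · obtain ⟨w, ⟨hwS, hwp⟩, hw⟩ := (hfib p).1
    exact ⟨w, ⟨hwS, hwp ▸ hpq⟩, hw.trans (by rw [hp])⟩
  · rintro _ ⟨w, ⟨hwS, hwq⟩, rfl⟩
    calc F w ≤ c * g (π w) := (hfib (π w)).2 ⟨w, ⟨hwS, rfl⟩, rfl⟩
      _ ≤ c * sSup G := mul_le_mul_of_nonneg_left (le_csSup hG.bddAbove ⟨π w, hwq, rfl⟩) hc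

namespace MaxProduct

variable {L : ℕ} {V : Fin (L + 1) → Type*}
  (a : (l : Fin L) → V l.castSucc → V l.succ → ℝ) (b : V (Fin.last L) → ℝ)

def pathWeight (w : ∀ j, V j) : ℝ :=
  (∏ l, a l (w l.castSucc) (w l.succ)) * b (w (Fin.last L))

def suffixWeight (i : Fin (L + 1)) (w : ∀ j, V j) : ℝ :=
  (∏ l with i ≤ l.castSucc, a l (w l.castSucc) (w l.succ)) * b (w (Fin.last L))

def prefixWeight (i : Fin L) (w : ∀ j, V j) : ℝ :=
  ∏ l with l < i, a l (w l.castSucc) (w l.succ)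

def agreeBefore (v : ∀ j, V j) (i : Fin (L + 1)) : Set (∀ j, V j) :=
  {w | ∀ j < i, w j = v j}

theorem suffixWeight_last (w : ∀ j, V j) :
    suffixWeight a b (Fin.last L) w = b (w (Fin.last L)) := by
  simp [suffixWeight]

theorem suffixWeight_castSucc (i : Fin L) (w : ∀ j, V j) :
    suffixWeight a b i.castSucc w = a i (w i.castSucc) (w i.succ) * suffixWeight a b i.succ w := by
  have : univ.filter (fun l : Fin L => i.castSucc ≤ l.castSucc) =
      insert i (univ.filter fun l => i.succ ≤ l.castSucc) := by
    ext l
    simp only [mem_filter, mem_univ, true_and, mem_insert, Fin.castSucc_le_castSucc_iff,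
      Fin.succ_le_castSucc_iff]
    exact le_iff_eq_or_lt.trans (or_congr_left eq_comm)
  rw [suffixWeight, this, prod_insert (by simp [Fin.succ_le_castSucc_iff]), suffixWeight, mul_assoc]

theorem suffixWeight_zero (w : ∀ j, V j) : suffixWeight a b 0 w = pathWeight a b w := by
  simp [suffixWeight, pathWeight]

theorem prefixWeight_mul_suffixWeight (i : Fin L) (w : ∀ j, V j) :
    prefixWeight a i w * suffixWeight a b i.castSucc w = pathWeight a b w := by
  rw [prefixWeight, suffixWeight, ← mul_assoc, pathWeight,
    ← prod_filter_mul_prod_filter_not univ (· < i)]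
  simp only [not_lt, Fin.castSucc_le_castSucc_iff]

theorem suffixWeight_congr (i : Fin (L + 1)) {w v : ∀ j, V j} (h : ∀ j, i ≤ j → w j = v j) :
    suffixWeight a b i w = suffixWeight a b i v := by
  rw [suffixWeight, suffixWeight, h _ (Fin.le_last i)]
  congr 1
  refine prod_congr rfl fun l hl => ?_
  rw [mem_filter] at hl
  rw [h _ hl.2, h _ (hl.2.trans (Fin.castSucc_le_succ l))]

theorem prefixWeight_congr (i : Fin L) {w v : ∀ j, V j} (h : w ∈ agreeBefore v i.succ) :
    prefixWeight a i w = prefixWeight a i v := by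
  refine prod_congr rfl fun l hl => ?_
  rw [mem_filter] at hl
  rw [h _ (Fin.castSucc_lt_succ_iff.mpr hl.2.le), h _ (Fin.succ_lt_succ_iff.mpr hl.2)]

variable [∀ j, Fintype (V j)] [∀ j, Nonempty (V j)] {a b}
  {μ : (j : Fin (L + 1)) → V j → ℝ} (ha : ∀ l x y, 0 ≤ a l x y)
  (hμL : ∀ x, μ (Fin.last L) x = b x)
  (hμ : ∀ l x, μ l.castSucc x = univ.sup' univ_nonempty fun y => a l x y * μ l.succ y)
include hμL hμ

include ha in
theorem suffixWeight_le_message (i : Fin (L + 1)) (w : ∀ j, V j) :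
    suffixWeight a b i w ≤ μ i (w i) := by
  induction i using Fin.reverseInduction with
  | last => rw [suffixWeight_last, hμL]
  | cast l ih =>
    rw [suffixWeight_castSucc, hμ]
    exact (mul_le_mul_of_nonneg_left ih (ha _ _ _)).trans
      (le_sup' (fun y => a l (w l.castSucc) y * μ l.succ y) (mem_univ _))

theorem exists_mem_agreeBefore_suffixWeight_eq_message (v : ∀ j, V j) (i : Fin (L + 1))
    (x : V i) : ∃ w ∈ agreeBefore v i, w i = x ∧ suffixWeight a b i w = μ i x := by
  induction i using Fin.reverseInduction with
  | last =>
    refine ⟨Function.update v (Fin.last L) x, fun j hj => Function.update_of_ne hj.ne _ _,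
      Function.update_self .., ?_⟩
    rw [suffixWeight_last, Function.update_self, hμL]
  | cast l ih =>
    obtain ⟨y, -, hy⟩ := exists_mem_eq_sup' univ_nonempty fun y => a l x y * μ l.succ y
    obtain ⟨w, hwv, hwy, hw⟩ := ih y
    have hne : l.succ ≠ l.castSucc := (Fin.castSucc_lt_succ (i := l)).ne'
    refine ⟨Function.update w l.castSucc x, fun j hj => ?_, Function.update_self .., ?_⟩
    · rw [Function.update_of_ne hj.ne, hwv j (hj.trans (Fin.castSucc_lt_succ (i := l)))]
    · have hsuffix : suffixWeight a b l.succ (Function.update w l.castSucc x) =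
          suffixWeight a b l.succ w :=
        suffixWeight_congr a b _ fun j hj =>
          Function.update_of_ne (hj.trans_lt' (Fin.castSucc_lt_succ (i := l))).ne' _ _
      rw [suffixWeight_castSucc, hsuffix, Function.update_self, Function.update_of_ne hne, hwy,
        hw, hμ, hy]

include ha in
theorem isGreatest_pathWeight_image_apply_zero_eq (x : V 0) :
    IsGreatest (pathWeight a b '' {w | w 0 = x}) (μ 0 x) := by
  refine ⟨?_, ?_⟩
  · obtain ⟨w, -, hwx, hw⟩ :=
      exists_mem_agreeBefore_suffixWeight_eq_message hμL hμ (fun _ => Classical.arbitrary _) 0 x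
    exact ⟨w, hwx, by rw [← suffixWeight_zero, hw]⟩
  · rintro _ ⟨w, rfl, rfl⟩
    rw [← suffixWeight_zero]
    exact suffixWeight_le_message ha hμL hμ 0 w

include ha in
theorem isGreatest_pathWeight_image_agreeBefore_succ (v : ∀ j, V j) (i : Fin L)
    (x : V i.succ) :
    IsGreatest (pathWeight a b '' {w ∈ agreeBefore v i.succ | w i.succ = x})
      (prefixWeight a i v * (a i (v i.castSucc) x * μ i.succ x)) := by
  have hsplit : ∀ w ∈ agreeBefore v i.succ, pathWeight a b w =
      prefixWeight a i v * (a i (v i.castSucc) (w i.succ) * suffixWeight a b i.succ w) := by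
    intro w hw
    rw [← prefixWeight_mul_suffixWeight a b i, prefixWeight_congr a i hw, suffixWeight_castSucc,
      hw _ (Fin.castSucc_lt_succ (i := i))]
  refine ⟨?_, ?_⟩
  · obtain ⟨w, hwv, hwx, hw⟩ :=
      exists_mem_agreeBefore_suffixWeight_eq_message hμL hμ v i.succ x
    exact ⟨w, ⟨hwv, hwx⟩, by rw [hsplit w hwv, hwx, hw]⟩
  · rintro _ ⟨w, ⟨hwv, rfl⟩, rfl⟩
    rw [hsplit w hwv]
    have hprefix : 0 ≤ prefixWeight a i v := prod_nonneg fun _ _ => ha _ _ _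
    gcongr
    · exact ha _ _ _
    · exact suffixWeight_le_message ha hμL hμ _ w

include ha in
theorem isGreatest_pathWeight_image_deviate_zero (v : ∀ j, V j) [Nontrivial (V 0)] :
    IsGreatest (pathWeight a b '' {w ∈ agreeBefore v 0 | w 0 ≠ v 0})
      (sSup {y | ∃ x, x ≠ v 0 ∧ y = μ 0 x}) := by
  have h := isGreatest_image_sep_ne_of_isGreatest_fibers (S := agreeBefore v 0) (g := μ 0)
    zero_le_one (v 0) fun x => by
      simpa [agreeBefore] using isGreatest_pathWeight_image_apply_zero_eq ha hμL hμ x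
  simpa using h

include ha in
theorem isGreatest_pathWeight_image_deviate_succ (v : ∀ j, V j) (i : Fin L)
    [Nontrivial (V i.succ)] :
    IsGreatest (pathWeight a b '' {w ∈ agreeBefore v i.succ | w i.succ ≠ v i.succ})
      (prefixWeight a i v *
        sSup {y | ∃ x, x ≠ v i.succ ∧ y = a i (v i.castSucc) x * μ i.succ x}) :=
  isGreatest_image_sep_ne_of_isGreatest_fibers (prod_nonneg fun _ _ => ha _ _ _) (v i.succ)
    (isGreatest_pathWeight_image_agreeBefore_succ ha hμL hμ v i)

end MaxProduct

open MaxProduct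

theorem stmt_4_general (L M : ℕ) (N : Fin (L + 1) → ℕ)
    (T : (l : Fin L) → Fin (M + 1) → Fin (M + 1) →
      Fin (N l.castSucc + 1) → Fin (N l.succ + 1) → ℝ)
    (r : Fin (M + 1) → Fin (N (Fin.last L) + 1) → ℝ)
    (μ : (j : Fin (L + 1)) → Fin (M + 1) → Fin (N j + 1) → ℝ)
    (hμL : ∀ m n, μ (Fin.last L) m n = |r m n|)
    (hμ : ∀ (l : Fin L) (m : Fin (M + 1)) (n : Fin (N l.castSucc + 1)),
      μ l.castSucc m n =
        Finset.univ.sup' Finset.univ_nonempty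
          (fun p : Fin (M + 1) × Fin (N l.succ + 1) =>
            |T l m p.1 n p.2| * μ l.succ p.1 p.2))
    (mh : Fin (L + 1) → Fin (M + 1)) (nh : (j : Fin (L + 1)) → Fin (N j + 1))
    (i : Fin (L + 1))
    (hcard : 1 < Fintype.card (Fin (M + 1) × Fin (N i + 1))) :
    (i = 0 →
      IsGreatest
        ((fun w : (Fin (L + 1) → Fin (M + 1)) × ((j : Fin (L + 1)) → Fin (N j + 1)) =>
            (∏ l : Fin L,
              |T l (w.1 l.castSucc) (w.1 l.succ) (w.2 l.castSucc) (w.2 l.succ)|) *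
              |r (w.1 (Fin.last L)) (w.2 (Fin.last L))|) ''
          { w | (∀ j, j < i → (w.1 j, w.2 j) = (mh j, nh j)) ∧
              (w.1 i, w.2 i) ≠ (mh i, nh i) })
        (sSup { x : ℝ | ∃ p : Fin (M + 1) × Fin (N 0 + 1),
            p ≠ (mh 0, nh 0) ∧ x = μ 0 p.1 p.2 })) ∧
    (∀ i' : Fin L, i = i'.succ →
      IsGreatest
        ((fun w : (Fin (L + 1) → Fin (M + 1)) × ((j : Fin (L + 1)) → Fin (N j + 1)) =>
            (∏ l : Fin L,
              |T l (w.1 l.castSucc) (w.1 l.succ) (w.2 l.castSucc) (w.2 l.succ)|) *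
              |r (w.1 (Fin.last L)) (w.2 (Fin.last L))|) ''
          { w | (∀ j, j < i → (w.1 j, w.2 j) = (mh j, nh j)) ∧
              (w.1 i, w.2 i) ≠ (mh i, nh i) })
        ((∏ j ∈ Finset.filter (fun j : Fin L => j < i') Finset.univ,
            |T j (mh j.castSucc) (mh j.succ) (nh j.castSucc) (nh j.succ)|) *
          sSup { x : ℝ | ∃ p : Fin (M + 1) × Fin (N i'.succ + 1),
            p ≠ (mh i'.succ, nh i'.succ) ∧
              x = |T i' (mh i'.castSucc) p.1 (nh i'.castSucc) p.2| *
                μ i'.succ p.1 p.2 })) := by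
  have hsurj : Function.Surjective
      fun w : (Fin (L + 1) → Fin (M + 1)) × ((j : Fin (L + 1)) → Fin (N j + 1)) =>
        fun j => (w.1 j, w.2 j) :=
    fun w => ⟨(fun j => (w j).1, fun j => (w j).2), rfl⟩
  have himage : (fun w : (Fin (L + 1) → Fin (M + 1)) × ((j : Fin (L + 1)) → Fin (N j + 1)) =>
        (∏ l : Fin L, |T l (w.1 l.castSucc) (w.1 l.succ) (w.2 l.castSucc) (w.2 l.succ)|) *
          |r (w.1 (Fin.last L)) (w.2 (Fin.last L))|) ''
        {w | (∀ j, j < i → (w.1 j, w.2 j) = (mh j, nh j)) ∧ (w.1 i, w.2 i) ≠ (mh i, nh i)} =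
      pathWeight (fun l x y => |T l x.1 y.1 x.2 y.2|) (fun x => |r x.1 x.2|) ''
        {w ∈ agreeBefore (fun j => (mh j, nh j)) i | w i ≠ (mh i, nh i)} := by
    rw [← Set.image_preimage_eq {w ∈ agreeBefore _ i | w i ≠ (mh i, nh i)} hsurj,
      ← Set.image_comp]
    rfl
  have : Nontrivial (Fin (M + 1) × Fin (N i + 1)) := Fintype.one_lt_card_iff_nontrivial.mp hcard
  rw [himage]
  refine ⟨?_, ?_⟩
  · rintro rfl
    exact isGreatest_pathWeight_image_deviate_zero (V := fun j => Fin (M + 1) × Fin (N j + 1))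
      (μ := fun j x => μ j x.1 x.2) (fun _ _ _ => abs_nonneg _) (fun x => hμL x.1 x.2)
      (fun l x => hμ l x.1 x.2) _
  · rintro i rfl
    exact isGreatest_pathWeight_image_deviate_succ (V := fun j => Fin (M + 1) × Fin (N j + 1))
      (μ := fun j x => μ j x.1 x.2) (fun _ _ _ => abs_nonneg _) (fun x => hμL x.1 x.2)
      (fun l x => hμ l x.1 x.2) _ i

/-- Constrained maximization over the split subset `A_i` reuses the
unconstrained max-product messages `μ`.  For a walk `(m̂,n̂)` and a layer `i`
(with at least two node–neuron pairs at layer `i`), the maximum of the absolute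
neuron-level walk relevance over
`A_i = { (m,n) : (m_j,n_j) = (m̂_j,n̂_j) ∀ j < i, (m_i,n_i) ≠ (m̂_i,n̂_i) }`
equals, for `i = 0`, `max_{(m,n) ≠ (m̂_0,n̂_0)} μ^0_{(m,n)}`, and for
`i = i'+1 ≥ 1`,
`(∏_{j=0}^{i-2} |T^{j,m̂_j,m̂_{j+1}}_{n̂_j,n̂_{j+1}}|) ·
 max_{(m,n) ≠ (m̂_i,n̂_i)} |T^{i-1,m̂_{i-1},m}_{n̂_{i-1},n}| μ^i_{(m,n)}`.
The inner maxima are expressed via `sSup` (supremum of a nonempty finite set of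
reals), and "the maximum over `A_i` equals …" via `IsGreatest`. -/
theorem stmt_4 (L M : ℕ) (hL : 1 ≤ L) (N : Fin (L + 1) → ℕ)
    (T : (l : Fin L) → Fin (M + 1) → Fin (M + 1) →
      Fin (N l.castSucc + 1) → Fin (N l.succ + 1) → ℝ)
    (r : Fin (M + 1) → Fin (N (Fin.last L) + 1) → ℝ)
    (μ : (j : Fin (L + 1)) → Fin (M + 1) → Fin (N j + 1) → ℝ)
    (hμL : ∀ m n, μ (Fin.last L) m n = |r m n|)
    (hμ : ∀ (l : Fin L) (m : Fin (M + 1)) (n : Fin (N l.castSucc + 1)),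
      μ l.castSucc m n =
        Finset.univ.sup' Finset.univ_nonempty
          (fun p : Fin (M + 1) × Fin (N l.succ + 1) =>
            |T l m p.1 n p.2| * μ l.succ p.1 p.2))
    (mh : Fin (L + 1) → Fin (M + 1)) (nh : (j : Fin (L + 1)) → Fin (N j + 1))
    (i : Fin (L + 1))
    (hcard : 1 < Fintype.card (Fin (M + 1) × Fin (N i + 1))) :
    (i = 0 →
      IsGreatest
        ((fun w : (Fin (L + 1) → Fin (M + 1)) × ((j : Fin (L + 1)) → Fin (N j + 1)) =>
            (∏ l : Fin L,
              |T l (w.1 l.castSucc) (w.1 l.succ) (w.2 l.castSucc) (w.2 l.succ)|) *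
              |r (w.1 (Fin.last L)) (w.2 (Fin.last L))|) ''
          { w | (∀ j, j < i → (w.1 j, w.2 j) = (mh j, nh j)) ∧
              (w.1 i, w.2 i) ≠ (mh i, nh i) })
        (sSup { x : ℝ | ∃ p : Fin (M + 1) × Fin (N 0 + 1),
            p ≠ (mh 0, nh 0) ∧ x = μ 0 p.1 p.2 })) ∧
    (∀ i' : Fin L, i = i'.succ →
      IsGreatest
        ((fun w : (Fin (L + 1) → Fin (M + 1)) × ((j : Fin (L + 1)) → Fin (N j + 1)) =>
            (∏ l : Fin L,
              |T l (w.1 l.castSucc) (w.1 l.succ) (w.2 l.castSucc) (w.2 l.succ)|) *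
              |r (w.1 (Fin.last L)) (w.2 (Fin.last L))|) ''
          { w | (∀ j, j < i → (w.1 j, w.2 j) = (mh j, nh j)) ∧
              (w.1 i, w.2 i) ≠ (mh i, nh i) })
        ((∏ j ∈ Finset.filter (fun j : Fin L => j < i') Finset.univ,
            |T j (mh j.castSucc) (mh j.succ) (nh j.castSucc) (nh j.succ)|) *
          sSup { x : ℝ | ∃ p : Fin (M + 1) × Fin (N i'.succ + 1),
            p ≠ (mh i'.succ, nh i'.succ) ∧
              x = |T i' (mh i'.castSucc) p.1 (nh i'.castSucc) p.2| *
                μ i'.succ p.1 p.2 })) :=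
  stmt_4_general L M N T r μ hμL hμ mh nh i hcard
end

section
/- Let X_0,…,X_L be finite nonempty types and let w^1,…,w^k be k distinct elements of ∏_{i=0}^L X_i. Then there exists a family of at most k·L + 1 pairwise disjoint subsets of ∏_i X_i whose union is (∏_i X_i) \ {w^1,…,w^k}, where each subset is of the form { x : x_j = a_j for all j < i, and x_i ∉ B } for some layer index i ∈ {0,…,L}, some prefix (a_0,…,a_{i−1}) ∈ ∏_{j<i} X_j, and some subset B ⊆ X_i. -/
theorem stmt_7_aux (L : ℕ) (X : Fin (L + 1) → Type*)
    [∀ i, Fintype (X i)] [∀ i, Nonempty (X i)]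
    (s : Finset ((i : Fin (L + 1)) → X i)) :
    ∃ (p : ℕ) (A : Fin p → Set ((i : Fin (L + 1)) → X i)),
      p ≤ s.card * L + 1 ∧
      (Pairwise fun j j' => Disjoint (A j) (A j')) ∧
      (⋃ j, A j) = Set.univ \ ↑s ∧
      (∀ j, ∃ (i : Fin (L + 1)) (a : (i' : Fin (L + 1)) → X i') (B : Set (X i)),
        A j = { x | (∀ i', i' < i → x i' = a i') ∧ x i ∉ B }) := by
  classical
  induction s using Finset.induction_on with
  | empty =>
      refine ⟨1, fun _ => Set.univ, by omega, ?_, ?_, ?_⟩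
      · intro j j' h; exact absurd (Subsingleton.elim j j') h
      · ext x; simp
      · intro j
        refine ⟨0, fun i => Classical.arbitrary _, ∅, ?_⟩
        ext x; simp [Fin.not_lt_zero]
  | @insert xs s hxs ih =>
      obtain ⟨p, A, hp, hdisj, hun, hform⟩ := ih
      have hxmem : xs ∈ ⋃ j, A j := by
        rw [hun]; exact ⟨trivial, by simpa using hxs⟩
      obtain ⟨j0, hj0⟩ := Set.mem_iUnion.mp hxmem
      obtain ⟨i, a, B, hAj0⟩ := hform j0
      have hpre : ∀ i', i' < i → xs i' = a i' := by
        rw [hAj0] at hj0; exact hj0.1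
      have hBi : xs i ∉ B := by
        rw [hAj0] at hj0; exact hj0.2
      have hj0' : xs ∈ A j0 := by rw [hAj0]; exact ⟨hpre, hBi⟩
      set T0 : Set ((i : Fin (L + 1)) → X i) :=
        { x | (∀ i', i' < i → x i' = a i') ∧ x i ∉ B ∪ {xs i} } with hT0
      set Tt : Fin L → Set ((i : Fin (L + 1)) → X i) := fun t =>
        if h : (i : ℕ) + (t : ℕ) + 1 < L + 1 then
          { x | (∀ i', i' < (⟨(i : ℕ) + (t : ℕ) + 1, h⟩ : Fin (L+1)) → x i' = xs i') ∧
              x ⟨(i : ℕ) + (t : ℕ) + 1, h⟩ ∉ ({xs ⟨(i : ℕ) + (t : ℕ) + 1, h⟩} : Set _) }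
        else ∅ with hTt
      set N : Fin p ⊕ Fin L → Set ((i : Fin (L + 1)) → X i) := fun j =>
        match j with
        | Sum.inl j => if j = j0 then T0 else A j
        | Sum.inr t => Tt t
        with hN
      have hNl : ∀ j : Fin p, N (Sum.inl j) = if j = j0 then T0 else A j := fun _ => rfl
      have hNr : ∀ t : Fin L, N (Sum.inr t) = Tt t := fun _ => rfl
      have hT0sub : T0 ⊆ A j0 := by
        rw [hAj0]
        intro x hx
        exact ⟨hx.1, fun hB => hx.2 (Or.inl hB)⟩
      have hT0ne : ∀ x ∈ T0, x ≠ xs := by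
        intro x hx hxeq
        exact hx.2 (Or.inr (by simp [hxeq]))
      have hTtsub : ∀ t, Tt t ⊆ A j0 := by
        intro t x hx
        rw [hTt] at hx
        rw [hAj0]
        by_cases h : (i : ℕ) + (t : ℕ) + 1 < L + 1
        · simp only [h, dif_pos] at hx
          have hlt : i < (⟨(i : ℕ) + (t : ℕ) + 1, h⟩ : Fin (L+1)) := by
            simp only [Fin.lt_def]; omega
          constructor
          · intro i' hi'
            rw [hx.1 i' (lt_trans hi' hlt), hpre i' hi']
          · rw [hx.1 i hlt]; exact hBi
        · simp [h] at hx
      have hTtne : ∀ t, ∀ x ∈ Tt t, x ≠ xs := by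
        intro t x hx hxeq
        rw [hTt] at hx
        by_cases h : (i : ℕ) + (t : ℕ) + 1 < L + 1
        · simp only [h, dif_pos] at hx
          exact hx.2 (by simp [hxeq])
        · simp [h] at hx
      have hTixi : ∀ t, ∀ x ∈ Tt t, x i = xs i := by
        intro t x hx
        rw [hTt] at hx
        by_cases h : (i : ℕ) + (t : ℕ) + 1 < L + 1
        · simp only [h, dif_pos] at hx
          exact hx.1 i (by simp only [Fin.lt_def]; omega)
        · simp [h] at hx
      -- union of the T's is A j0 minus xs
      have hTun : T0 ∪ (⋃ t, Tt t) = A j0 \ {xs} := by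
        apply Set.Subset.antisymm
        · rintro x (hx | hx)
          · exact ⟨hT0sub hx, hT0ne x hx⟩
          · obtain ⟨t, ht⟩ := Set.mem_iUnion.mp hx
            exact ⟨hTtsub t ht, hTtne t x ht⟩
        · rintro x ⟨hx, hxne⟩
          rw [hAj0] at hx
          simp only [Set.mem_singleton_iff] at hxne
          by_cases hxi : x i = xs i
          · have hne : ∃ u, x u ≠ xs u := Function.ne_iff.mp hxne
            have hDne : (Finset.univ.filter (fun u => x u ≠ xs u)).Nonempty := by
              obtain ⟨u, hu⟩ := hne
              exact ⟨u, Finset.mem_filter.mpr ⟨Finset.mem_univ _, hu⟩⟩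
            set u := (Finset.univ.filter (fun u => x u ≠ xs u)).min' hDne with hudef
            have huprop : x u ≠ xs u := (Finset.mem_filter.mp (Finset.min'_mem _ hDne)).2
            have humin : ∀ v, v < u → x v = xs v := by
              intro v hv
              by_contra hvv
              exact absurd
                (Finset.min'_le _ v (Finset.mem_filter.mpr ⟨Finset.mem_univ _, hvv⟩))
                (not_le.mpr hv)
            have hiu : i < u := by
              rcases lt_trichotomy i u with h | h | h
              · exact h
              · exact absurd (h ▸ hxi) huprop
              · exact absurd ((hx.1 u h).trans (hpre u h).symm) huprop
            have hiuval : (i : ℕ) < (u : ℕ) := hiu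
            have huL : (u : ℕ) < L + 1 := u.isLt
            have htval : (u : ℕ) - (i : ℕ) - 1 < L := by omega
            refine Or.inr (Set.mem_iUnion.mpr ⟨⟨(u : ℕ) - (i : ℕ) - 1, htval⟩, ?_⟩)
            rw [hTt]
            have hvalid : (i : ℕ) + ((u : ℕ) - (i : ℕ) - 1) + 1 < L + 1 := by omega
            simp only [dif_pos hvalid]
            have hueq : (⟨(i : ℕ) + ((u : ℕ) - (i : ℕ) - 1) + 1, hvalid⟩ : Fin (L+1)) = u := by
              apply Fin.ext; simp; omega
            rw [hueq]
            exact ⟨humin, by simpa using huprop⟩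
          · left
            exact ⟨hx.1, fun hmem => by
              rcases hmem with hmem | hmem
              · exact hx.2 hmem
              · exact hxi hmem⟩
      -- disjointness facts
      have hT0Tt : ∀ t, Disjoint T0 (Tt t) := by
        intro t
        rw [Set.disjoint_left]
        intro x hx hx'
        exact hx.2 (Or.inr (by simpa using hTixi t x hx'))
      have hTtTt : ∀ t t', t ≠ t' → Disjoint (Tt t) (Tt t') := by
        have key : ∀ t t' : Fin L, (t : ℕ) < (t' : ℕ) → Disjoint (Tt t) (Tt t') := by
          intro t t' htt
          rw [Set.disjoint_left]
          intro x hx hx'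
          rw [hTt] at hx hx'
          by_cases h : (i : ℕ) + (t : ℕ) + 1 < L + 1
          · by_cases h' : (i : ℕ) + (t' : ℕ) + 1 < L + 1
            · simp only [h, dif_pos] at hx
              simp only [h', dif_pos] at hx'
              have : x ⟨(i : ℕ) + (t : ℕ) + 1, h⟩ = xs ⟨(i : ℕ) + (t : ℕ) + 1, h⟩ :=
                hx'.1 _ (by simp only [Fin.lt_def]; omega)
              exact hx.2 (by simpa using this)
            · simp [h'] at hx'
          · simp [h] at hx
        intro t t' htt
        rcases lt_trichotomy (t : ℕ) (t' : ℕ) with h | h | h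
        · exact key t t' h
        · exact absurd (Fin.ext h) htt
        · exact (key t' t h).symm
      have hNdisj : ∀ c c', c ≠ c' → Disjoint (N c) (N c') := by
        intro c c' hcc
        rcases c with j | t <;> rcases c' with j' | t'
        · have hjj : j ≠ j' := by simpa using hcc
          rw [hNl, hNl]
          by_cases hj : j = j0
          · have hj' : j' ≠ j0 := fun h => hjj (hj.trans h.symm)
            rw [if_pos hj, if_neg hj']
            have : j0 ≠ j' := fun h => hj' h.symm
            exact (hdisj this).mono_left hT0sub
          · by_cases hj' : j' = j0
            · rw [if_neg hj, if_pos hj']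
              have h1 : Disjoint (A j) (A j0) := hdisj hj
              exact h1.mono_right hT0sub
            · rw [if_neg hj, if_neg hj']
              exact hdisj hjj
        · rw [hNl, hNr]
          by_cases hj : j = j0
          · rw [if_pos hj]
            exact hT0Tt t'
          · rw [if_neg hj]
            exact ((hdisj hj).mono_right (hTtsub t'))
        · rw [hNr, hNl]
          by_cases hj : j' = j0
          · rw [if_pos hj]
            exact (hT0Tt t).symm
          · rw [if_neg hj]
            exact ((hdisj hj).mono_right (hTtsub t)).symm
        · exact hTtTt t t' (fun h => hcc (by rw [h]))
      -- union of N
      have hNun : (⋃ c, N c) = (⋃ j, A j) \ {xs} := by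
        apply Set.Subset.antisymm
        · rintro x hx
          obtain ⟨c, hc⟩ := Set.mem_iUnion.mp hx
          rcases c with j | t
          · by_cases hj : j = j0
            · rw [hNl, if_pos hj] at hc
              exact ⟨Set.mem_iUnion.mpr ⟨j0, hT0sub hc⟩, hT0ne x hc⟩
            · rw [hNl, if_neg hj] at hc
              refine ⟨Set.mem_iUnion.mpr ⟨j, hc⟩, ?_⟩
              intro hxeq
              simp only [Set.mem_singleton_iff] at hxeq
              subst hxeq
              exact Set.disjoint_left.mp (hdisj hj) hc hj0'
          · rw [hNr] at hc
            exact ⟨Set.mem_iUnion.mpr ⟨j0, hTtsub t hc⟩, hTtne t x hc⟩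
        · rintro x ⟨hx, hxne⟩
          obtain ⟨j, hj⟩ := Set.mem_iUnion.mp hx
          by_cases hjj : j = j0
          · rw [hjj] at hj
            have : x ∈ T0 ∪ ⋃ t, Tt t := hTun ▸ ⟨hj, hxne⟩
            rcases this with h | h
            · exact Set.mem_iUnion.mpr ⟨Sum.inl j0, by rw [hNl, if_pos rfl]; exact h⟩
            · obtain ⟨t, ht⟩ := Set.mem_iUnion.mp h
              exact Set.mem_iUnion.mpr ⟨Sum.inr t, ht⟩
          · exact Set.mem_iUnion.mpr ⟨Sum.inl j, by rw [hNl, if_neg hjj]; exact hj⟩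
      -- assemble the final family
      refine ⟨p + L, N ∘ finSumFinEquiv.symm, ?_, ?_, ?_, ?_⟩
      · rw [Finset.card_insert_of_notMem hxs]
        have : (s.card + 1) * L = s.card * L + L := by ring
        rw [this]
        omega
      · intro j j' hjj
        exact hNdisj _ _ (finSumFinEquiv.symm.injective.ne hjj)
      · have hre : (⋃ j, (N ∘ finSumFinEquiv.symm) j) = ⋃ c, N c := by
          simp only [Function.comp_apply]
          exact finSumFinEquiv.symm.surjective.iUnion_comp N
        rw [hre, hNun, hun]
        ext x
        simp only [Set.mem_diff, Set.mem_singleton_iff, Finset.coe_insert, Set.mem_insert_iff,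
          Set.mem_univ, true_and, Finset.mem_coe]
        tauto
      · intro j
        rcases hc : finSumFinEquiv.symm j with jl | t
        · simp only [Function.comp_apply, hc]
          by_cases hj : jl = j0
          · refine ⟨i, a, B ∪ {xs i}, ?_⟩
            rw [hNl, if_pos hj]
          · refine (hform jl).imp fun i' h => h.imp fun a' h => h.imp fun B' h => ?_
            rw [hNl, if_neg hj]; exact h
        · simp only [Function.comp_apply, hc]
          rw [hNr]
          by_cases h : (i : ℕ) + (t : ℕ) + 1 < L + 1
          · refine ⟨⟨(i : ℕ) + (t : ℕ) + 1, h⟩, xs, {xs ⟨(i : ℕ) + (t : ℕ) + 1, h⟩}, ?_⟩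
            rw [hTt]
            simp only [dif_pos h]
          · refine ⟨0, fun i => Classical.arbitrary _, Set.univ, ?_⟩
            rw [hTt]
            simp only [dif_neg h]
            ext x; simp


/-- Upper bound on the number of search subsets: for `k` distinct walks
`w^1,…,w^k` in the finite product `∏_{i=0}^L X_i`, there are at most `k·L + 1`
pairwise disjoint subsets, each of the form
`{ x : x_j = a_j ∀ j < i, x_i ∉ B }` (for some layer `i`, prefix `a`, and
`B ⊆ X_i`), whose union is the product minus `{w^1,…,w^k}`. -/
theorem stmt_7 (L : ℕ) (X : Fin (L + 1) → Type*)
    [∀ i, Fintype (X i)] [∀ i, Nonempty (X i)]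
    (k : ℕ) (w : Fin k → ((i : Fin (L + 1)) → X i))
    (hw : Function.Injective w) :
    ∃ (p : ℕ) (A : Fin p → Set ((i : Fin (L + 1)) → X i)),
      p ≤ k * L + 1 ∧
      (Pairwise fun j j' => Disjoint (A j) (A j')) ∧
      (⋃ j, A j) = Set.univ \ Set.range w ∧
      (∀ j, ∃ (i : Fin (L + 1)) (a : (i' : Fin (L + 1)) → X i') (B : Set (X i)),
        A j = { x | (∀ i', i' < i → x i' = a i') ∧ x i ∉ B }) := by
  classical
  obtain ⟨p, A, hp, hdisj, hun, hform⟩ := stmt_7_aux L X (Finset.univ.image w)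
  have hcard : (Finset.univ.image w).card = k := by
    rw [Finset.card_image_of_injective _ hw, Finset.card_univ, Fintype.card_fin]
  have hcoe : ((Finset.univ.image w : Finset _) : Set _) = Set.range w := by
    ext x; simp
  exact ⟨p, A, hcard ▸ hp, hdisj, hcoe ▸ hun, hform⟩
end

section
/- Suppose for every layer l ∈ {0,…,L−1} and every node pair (m,m') the propagation matrix T^{l,m,m'} has identical columns, T^{l,m,m'}_{n,n'} = τ^{l,m,m'}_n for all n', and define the edge factors c_l(m,m') := ∑_{n ∈ [N⁽ˡ⁾]} τ^{l,m,m'}_n and terminals s(m) := ∑_{n ∈ [N⁽ᴸ⁾]} r^{L,m}_n. Assume c_l(m,m') ≥ 0 for all l, m, m' and s(m) ≥ 0 for all m. Define backward messages σ^L(m) = s(m) and σ^l(m) = max_{m' ∈ [M]} c_l(m,m')·σ^{l+1}(m') for l = L−1,…,0. Then the maximum node-level walk relevance is computed exactly by these messages: max_{m ∈ [M]^{L+1}} R^m = max_{m_0 ∈ [M]} σ^0(m_0), where R^m = ∑_{n ∈ ∏_l [N⁽ˡ⁾]} (∏_{l=0}^{L−1} T^{l,m_l,m_{l+1}}_{n_l,n_{l+1}})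 r^{L,m_L}_{n_L}. -/
private lemma mul_sup'_aux {ι : Type*} [Fintype ι] [Nonempty ι] (a : ℝ) (ha : 0 ≤ a)
    (f : ι → ℝ) :
    a * Finset.univ.sup' Finset.univ_nonempty f
      = Finset.univ.sup' Finset.univ_nonempty (fun i => a * f i) :=
  Finset.comp_sup'_eq_sup'_comp _ (fun x => a * x) (fun x y => mul_max_of_nonneg x y ha)

private lemma sup'_cons_aux {X : Type*} [Fintype X] [Nonempty X] {n : ℕ}
    (F : (Fin (n + 1) → X) → ℝ) :
    Finset.univ.sup' Finset.univ_nonempty F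
      = Finset.univ.sup' Finset.univ_nonempty (fun x : X =>
          Finset.univ.sup' Finset.univ_nonempty (fun p : Fin n → X => F (Fin.cons x p))) := by
  apply le_antisymm
  · apply Finset.sup'_le
    intro q _
    calc F q = F (Fin.cons (q 0) (Fin.tail q)) := by rw [Fin.cons_self_tail]
    _ ≤ Finset.univ.sup' Finset.univ_nonempty (fun p : Fin n → X => F (Fin.cons (q 0) p)) :=
        Finset.le_sup' (fun p : Fin n → X => F (Fin.cons (q 0) p)) (Finset.mem_univ (Fin.tail q))
    _ ≤ _ := Finset.le_sup' (fun x : X =>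
          Finset.univ.sup' Finset.univ_nonempty (fun p : Fin n → X => F (Fin.cons x p)))
          (Finset.mem_univ (q 0))
  · apply Finset.sup'_le
    intro x _
    apply Finset.sup'_le
    intro p _
    exact Finset.le_sup' F (Finset.mem_univ _)

private lemma amp_aux (M : ℕ) : ∀ (L : ℕ) (c : Fin L → Fin (M + 1) → Fin (M + 1) → ℝ)
    (s : Fin (M + 1) → ℝ)
    (_ : ∀ l m m', 0 ≤ c l m m')
    (σ : Fin (L + 1) → Fin (M + 1) → ℝ)
    (_ : ∀ m, σ (Fin.last L) m = s m)
    (_ : ∀ (l : Fin L) (m : Fin (M + 1)),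
      σ l.castSucc m = Finset.univ.sup' Finset.univ_nonempty
        (fun m' : Fin (M + 1) => c l m m' * σ l.succ m'))
    (m0 : Fin (M + 1)),
    σ 0 m0 = Finset.univ.sup' Finset.univ_nonempty (fun p : Fin L → Fin (M + 1) =>
      (∏ l : Fin L, c l ((Fin.cons m0 p : Fin _ → Fin (M + 1)) l.castSucc) ((Fin.cons m0 p : Fin _ → Fin (M + 1)) l.succ))
        * s ((Fin.cons m0 p : Fin _ → Fin (M + 1)) (Fin.last L))) := by
  intro L
  induction L with
  | zero =>
    intro c s hcpos σ hσL hσ m0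
    have h0 : (0 : Fin 1) = Fin.last 0 := rfl
    rw [h0, hσL]
    have : ∀ p : Fin 0 → Fin (M + 1),
        (∏ l : Fin 0, c l ((Fin.cons m0 p : Fin _ → Fin (M + 1)) l.castSucc) ((Fin.cons m0 p : Fin _ → Fin (M + 1)) l.succ))
          * s ((Fin.cons m0 p : Fin _ → Fin (M + 1)) (Fin.last 0)) = s m0 := by
      intro p; simp [Fin.last]
    simp only [this]
    exact (Finset.sup'_const _ _).symm
  | succ L ih =>
    intro c s hcpos σ hσL hσ m0
    have h0 : (0 : Fin (L + 2)) = (0 : Fin (L + 1)).castSucc := rfl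
    rw [h0, hσ]
    have key : ∀ m1 : Fin (M + 1),
        σ (0 : Fin (L + 1)).succ m1
          = Finset.univ.sup' Finset.univ_nonempty (fun p : Fin L → Fin (M + 1) =>
              (∏ l : Fin L, c l.succ ((Fin.cons m1 p : Fin _ → Fin (M + 1)) l.castSucc) ((Fin.cons m1 p : Fin _ → Fin (M + 1)) l.succ))
                * s ((Fin.cons m1 p : Fin _ → Fin (M + 1)) (Fin.last L))) := by
      intro m1
      have := ih (fun l => c l.succ) s (fun l m m' => hcpos l.succ m m')
        (fun j => σ j.succ)
        (fun m => by
          show σ (Fin.last L).succ m = s m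
          rw [Fin.succ_last]; exact hσL m)
        (fun l m => by
          show σ (l.castSucc).succ m = _
          rw [Fin.succ_castSucc]
          exact hσ l.succ m)
        m1
      simpa using this
    rw [sup'_cons_aux (fun q : Fin (L + 1) → Fin (M + 1) =>
      (∏ l : Fin (L + 1), c l ((Fin.cons m0 q : Fin _ → Fin (M + 1)) l.castSucc) ((Fin.cons m0 q : Fin _ → Fin (M + 1)) l.succ))
        * s ((Fin.cons m0 q : Fin _ → Fin (M + 1)) (Fin.last (L + 1))))]
    apply Finset.sup'_congr _ rfl
    intro m1 _
    rw [key, mul_sup'_aux _ (hcpos 0 m0 m1)]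
    apply Finset.sup'_congr _ rfl
    intro p _
    -- pointwise equality
    simp only [Fin.prod_univ_succ, ← Fin.succ_castSucc, ← Fin.succ_last, Fin.cons_succ,
      Fin.cons_zero, Fin.castSucc_zero]
    ring

/-- Exactness of AMP-ave under the exact column-similarity assumption with
nonnegative factors: if every `T^{l,m,m'}` has identical columns equal to
`τ^{l,m,m'}`, the edge factors `c_l(m,m') = ∑_n τ^{l,m,m'}_n` and terminals
`s(m) = ∑_n r^{L,m}_n` are nonnegative, and the backward messages satisfy
`σ^L = s`, `σ^l(m) = max_{m'} c_l(m,m') σ^{l+1}(m')`, then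
`max_m R^m = max_{m_0} σ^0(m_0)`. -/
theorem stmt_13 (L M : ℕ) (hL : 1 ≤ L) (N : Fin (L + 1) → ℕ)
    (T : (l : Fin L) → Fin (M + 1) → Fin (M + 1) →
      Fin (N l.castSucc + 1) → Fin (N l.succ + 1) → ℝ)
    (τ : (l : Fin L) → Fin (M + 1) → Fin (M + 1) → Fin (N l.castSucc + 1) → ℝ)
    (hcol : ∀ (l : Fin L) (m m' : Fin (M + 1)) (n : Fin (N l.castSucc + 1))
      (n' : Fin (N l.succ + 1)), T l m m' n n' = τ l m m' n)
    (r : Fin (M + 1) → Fin (N (Fin.last L) + 1) → ℝ)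
    (c : (l : Fin L) → Fin (M + 1) → Fin (M + 1) → ℝ)
    (hc : ∀ (l : Fin L) (m m' : Fin (M + 1)),
      c l m m' = ∑ n : Fin (N l.castSucc + 1), τ l m m' n)
    (s : Fin (M + 1) → ℝ)
    (hs : ∀ m, s m = ∑ n : Fin (N (Fin.last L) + 1), r m n)
    (hcpos : ∀ (l : Fin L) (m m' : Fin (M + 1)), 0 ≤ c l m m')
    (hspos : ∀ m, 0 ≤ s m)
    (σ : Fin (L + 1) → Fin (M + 1) → ℝ)
    (hσL : ∀ m, σ (Fin.last L) m = s m)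
    (hσ : ∀ (l : Fin L) (m : Fin (M + 1)),
      σ l.castSucc m =
        Finset.univ.sup' Finset.univ_nonempty
          (fun m' : Fin (M + 1) => c l m m' * σ l.succ m')) :
    Finset.univ.sup' Finset.univ_nonempty
        (fun m : Fin (L + 1) → Fin (M + 1) =>
          ∑ n : (j : Fin (L + 1)) → Fin (N j + 1),
            (∏ l : Fin L,
              T l (m l.castSucc) (m l.succ) (n l.castSucc) (n l.succ)) *
              r (m (Fin.last L)) (n (Fin.last L))) =
      Finset.univ.sup' Finset.univ_nonempty (fun m0 : Fin (M + 1) => σ 0 m0) := by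
  -- Step 1: separability of the walk relevance
  have step1 : ∀ m : Fin (L + 1) → Fin (M + 1),
      (∑ n : (j : Fin (L + 1)) → Fin (N j + 1),
          (∏ l : Fin L, T l (m l.castSucc) (m l.succ) (n l.castSucc) (n l.succ)) *
            r (m (Fin.last L)) (n (Fin.last L)))
        = (∏ l : Fin L, c l (m l.castSucc) (m l.succ)) * s (m (Fin.last L)) := by
    intro m
    set h : (j : Fin (L + 1)) → Fin (N j + 1) → ℝ :=
      fun j => Fin.lastCases (motive := fun j => Fin (N j + 1) → ℝ)
        (fun x => r (m (Fin.last L)) x)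
        (fun l x => τ l (m l.castSucc) (m l.succ) x) j with hh
    have hcast : ∀ (l : Fin L) (x : Fin (N l.castSucc + 1)),
        h l.castSucc x = τ l (m l.castSucc) (m l.succ) x := by
      intro l x
      simp only [hh, Fin.lastCases_castSucc]
    have hlast : ∀ x : Fin (N (Fin.last L) + 1), h (Fin.last L) x = r (m (Fin.last L)) x := by
      intro x
      simp only [hh, Fin.lastCases_last]
    have hterm : ∀ n : (j : Fin (L + 1)) → Fin (N j + 1),
        (∏ l : Fin L, T l (m l.castSucc) (m l.succ) (n l.castSucc) (n l.succ)) *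
            r (m (Fin.last L)) (n (Fin.last L))
          = ∏ j : Fin (L + 1), h j (n j) := by
      intro n
      rw [Fin.prod_univ_castSucc (f := fun j => h j (n j))]
      rw [hlast]
      congr 1
      exact Finset.prod_congr rfl (fun l _ => by rw [hcol, hcast])
    rw [Finset.sum_congr rfl (fun n _ => hterm n)]
    have := Finset.prod_univ_sum (fun j : Fin (L + 1) => (Finset.univ : Finset (Fin (N j + 1))))
      (fun j x => h j x)
    rw [Fintype.piFinset_univ] at this
    rw [← this]
    rw [Fin.prod_univ_castSucc (f := fun j => ∑ x, h j x)]
    congr 1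
    · exact Finset.prod_congr rfl (fun l _ => by
        rw [hc]
        exact Finset.sum_congr rfl (fun x _ => (hcast l x).symm) |>.symm)
    · rw [hs]
      exact Finset.sum_congr rfl (fun x _ => hlast x)
  rw [Finset.sup'_congr _ rfl (fun m _ => step1 m)]
  rw [sup'_cons_aux (fun q : Fin (L + 1) → Fin (M + 1) =>
    (∏ l : Fin L, c l (q l.castSucc) (q l.succ)) * s (q (Fin.last L)))]
  apply Finset.sup'_congr _ rfl
  intro m0 _
  exact (amp_aux M L c s hcpos σ hσL hσ m0).symm
end
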